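/- Let A: X → X* be continuous, linear, and monotone. Then the Penot–Zălinescu autoconjugate representer 𝒜_A and the Ghoussoub autoconjugate representer 𝒞_A coincide, and for every (x,x*) ∈ X×X*: 𝒜_A(x,x*) = 𝒞_A(x,x*) = ⟨x,x*⟩ + q_{A₊}*(x* − Ax). -/

import Mathlib

noncomputable section
open scoped Classical
open Filter Topology

/-- The Fenchel conjugate of `F : X × X* → (-∞,+∞]`, as a function on `X* × X`:
`F*(x*,x) = sup_{(y,y*)} (⟨y,x*⟩ + ⟨x,y*⟩ - F(y,y*))`. -/
def conj2 {X : Type*} [NormedAddCommGroup X] [NormedSpace ℝ X]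
    (F : X × (X →L[ℝ] ℝ) → EReal) : (X →L[ℝ] ℝ) × X → EReal :=
  fun p => ⨆ q : X × (X →L[ℝ] ℝ), ((p.1 q.1 + q.2 p.2 : ℝ) : EReal) - F q

/-- `F` is autoconjugate: `F*(x*,x) = F(x,x*)` for all `(x,x*)`. -/
def Autoconjugate {X : Type*} [NormedAddCommGroup X] [NormedSpace ℝ X]
    (F : X × (X →L[ℝ] ℝ) → EReal) : Prop :=
  ∀ (x : X) (x' : X →L[ℝ] ℝ), conj2 F (x', x) = F (x, x')

/-- `F` is a representer for the set-valued operator `A : X ⇉ X*`: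
`gra A = {(x,x*) : F(x,x*) = ⟨x,x*⟩}`. -/
def IsRepresenter {X : Type*} [NormedAddCommGroup X] [NormedSpace ℝ X]
    (F : X × (X →L[ℝ] ℝ) → EReal) (A : X → Set (X →L[ℝ] ℝ)) : Prop :=
  ∀ (x : X) (x' : X →L[ℝ] ℝ), x' ∈ A x ↔ F (x, x') = ((x' x : ℝ) : EReal)

/-- A set-valued operator `A : X ⇉ X*` is monotone. -/
def MonotoneOp {X : Type*} [NormedAddCommGroup X] [NormedSpace ℝ X]
    (A : X → Set (X →L[ℝ] ℝ)) : Prop :=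
  ∀ ⦃x y : X⦄ ⦃x' y' : X →L[ℝ] ℝ⦄, x' ∈ A x → y' ∈ A y → 0 ≤ (x' - y') (x - y)

/-- A set-valued operator is maximal monotone if it is monotone and admits no proper
monotone extension (in the sense of graph inclusion). -/
def MaximalMonotoneOp {X : Type*} [NormedAddCommGroup X] [NormedSpace ℝ X]
    (A : X → Set (X →L[ℝ] ℝ)) : Prop :=
  MonotoneOp A ∧ ∀ B : X → Set (X →L[ℝ] ℝ), MonotoneOp B → (∀ x, A x ⊆ B x) → B = A

/-- The quadratic function `q_A(x) = ½⟨x,Ax⟩` associated with a continuous linear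
`A : X → X*`. -/
def qF {X : Type*} [NormedAddCommGroup X] [NormedSpace ℝ X]
    (A : X →L[ℝ] X →L[ℝ] ℝ) : X → ℝ :=
  fun x => (1 / 2) * A x x

/-- The Fenchel conjugate of a real-valued function `φ : X → ℝ`, as an `EReal`-valued
function on `X*`: `φ*(x*) = sup_y (⟨y,x*⟩ - φ(y))`. -/
def legendre {X : Type*} [NormedAddCommGroup X] [NormedSpace ℝ X]
    (φ : X → ℝ) : (X →L[ℝ] ℝ) → EReal :=
  fun x' => ⨆ y : X, ((x' y - φ y : ℝ) : EReal)

/-- The symmetric part `A₊ = ½A + ½A*` of a continuous linear `A : X → X*`, where the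
adjoint (restricted to `X`) is `A.flip`. -/
def symPart {X : Type*} [NormedAddCommGroup X] [NormedSpace ℝ X]
    (A : X →L[ℝ] X →L[ℝ] ℝ) : X →L[ℝ] X →L[ℝ] ℝ :=
  (1 / 2 : ℝ) • (A + A.flip)

/-- The antisymmetric part `A∘ = ½A - ½A*` of a continuous linear `A : X → X*`. -/
def antiPart {X : Type*} [NormedAddCommGroup X] [NormedSpace ℝ X]
    (A : X →L[ℝ] X →L[ℝ] ℝ) : X →L[ℝ] X →L[ℝ] ℝ :=
  (1 / 2 : ℝ) • (A - A.flip)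

/-- The Fitzpatrick function of a continuous linear `A : X → X*`:
`F_A(x,x*) = sup_y (⟨x,Ay⟩ + ⟨y,x*⟩ - ⟨y,Ay⟩)`. -/
def fitz {X : Type*} [NormedAddCommGroup X] [NormedSpace ℝ X]
    (A : X →L[ℝ] X →L[ℝ] ℝ) : X × (X →L[ℝ] ℝ) → EReal :=
  fun p => ⨆ y : X, ((A y p.1 + p.2 y - A y y : ℝ) : EReal)

/-- The Penot–Zălinescu function
`𝒜_A(x,x*) = inf_{y*} (½F_A(x, x*+y*) + ½F_A*(x*-y*, x))`. -/
def pzRep {X : Type*} [NormedAddCommGroup X] [NormedSpace ℝ X]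
    (A : X →L[ℝ] X →L[ℝ] ℝ) : X × (X →L[ℝ] ℝ) → EReal :=
  fun p => ⨅ y' : X →L[ℝ] ℝ,
    ((1 / 2 : ℝ) : EReal) * fitz A (p.1, p.2 + y')
      + ((1 / 2 : ℝ) : EReal) * conj2 (fitz A) (p.2 - y', p.1)

/-- The Ghoussoub function `𝒞_A(x,x*) = q_{A₊}(x) + q_{A₊}*(x* - A∘x)`. -/
def ghoussoub {X : Type*} [NormedAddCommGroup X] [NormedSpace ℝ X]
    (A : X →L[ℝ] X →L[ℝ] ℝ) : X × (X →L[ℝ] ℝ) → EReal :=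
  fun p => ((qF (symPart A) p.1 : ℝ) : EReal) + legendre (qF (symPart A)) (p.2 - antiPart A p.1)

/-!
The conjugate `F_A*(x*, x)` is finite only on the graph of `A`, where it equals `⟨x, Ax⟩`, so the
infimum defining `𝒜_A(x, x*)` is attained at the single point `y* = x* - Ax`. On the other hand
`½ F_A(x, z) = q*((z + A*x)/2)` with `q = q_{A₊}`, and this point gives exactly
`q*(x* - A∘x) + q(x) = 𝒞_A(x, x*)`. Finally `q*(w + A₊y) = q*(w) + ⟨y, w⟩ + q(y)` turns
`q*(x* - A∘x) = q*((x* - Ax) + A₊x)` into the third expression.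
-/

namespace EReal

def addCoeOrderIso (c : ℝ) : EReal ≃o EReal where
  toFun a := a + c
  invFun a := a - c
  left_inv _ := add_sub_cancel_right
  right_inv _ := sub_add_cancel
  map_rel_iff' {a b} := by
    refine ⟨fun h => ?_, fun h => by dsimp; gcongr⟩
    simpa only [Equiv.coe_fn_mk, add_sub_cancel_right] using sub_le_sub h (le_refl (c : EReal))

def coeMulOrderIso {c : ℝ} (hc : 0 < c) : EReal ≃o EReal where
  toFun a := c * a
  invFun a := (c⁻¹ : ℝ) * a
  left_inv a := by
    dsimp only
    rw [← mul_assoc, ← coe_mul, inv_mul_cancel₀ hc.ne', coe_one, one_mul]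
  right_inv a := by
    dsimp only
    rw [← mul_assoc, ← coe_mul, mul_inv_cancel₀ hc.ne', coe_one, one_mul]
  map_rel_iff' {a b} := by
    refine ⟨fun h => ?_, fun h => mul_le_mul_of_nonneg_left h (EReal.coe_nonneg.mpr hc.le)⟩
    have := mul_le_mul_of_nonneg_left h (EReal.coe_nonneg.mpr (inv_nonneg.mpr hc.le))
    simpa only [Equiv.coe_fn_mk, ← mul_assoc, ← coe_mul, inv_mul_cancel₀ hc.ne', coe_one,
      one_mul] using this

variable {ι : Sort*}

theorem iSup_add_coe (f : ι → EReal) (c : ℝ) : ⨆ i, (f i + c) = (⨆ i, f i) + c :=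
  (map_iSup (addCoeOrderIso c) f).symm

theorem coe_mul_iSup {c : ℝ} (hc : 0 < c) (f : ι → EReal) : c * ⨆ i, f i = ⨆ i, c * f i :=
  map_iSup (coeMulOrderIso hc) f

end EReal

section Quadratic

variable {X : Type*} [NormedAddCommGroup X] [NormedSpace ℝ X]

theorem legendre_ne_bot (φ : X → ℝ) (w : X →L[ℝ] ℝ) : legendre φ w ≠ ⊥ :=
  ne_bot_of_le_ne_bot (EReal.coe_ne_bot _) (le_iSup (fun y => ((w y - φ y : ℝ) : EReal)) 0)

variable (B : X →L[ℝ] X →L[ℝ] ℝ)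

theorem legendre_qF_add_apply (hB : ∀ y z, B y z = B z y) (w : X →L[ℝ] ℝ) (y : X) :
    legendre (qF B) (w + B y) = legendre (qF B) w + ((w y + qF B y : ℝ) : EReal) := by
  rw [legendre, ← (Equiv.addRight y).iSup_comp, legendre, ← EReal.iSup_add_coe]
  refine iSup_congr fun z => ?_
  norm_cast
  simp only [Equiv.coe_addRight, add_apply, map_add, qF, hB z y]
  ring

end Quadratic

section Operator

variable {X : Type*} [NormedAddCommGroup X] [NormedSpace ℝ X] (A : X →L[ℝ] X →L[ℝ] ℝ)

@[simp]
theorem symPart_apply (y z : X) : symPart A y z = 1 / 2 * (A y z + A z y) := by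
  simp [symPart, mul_add]

@[simp]
theorem antiPart_apply (y z : X) : antiPart A y z = 1 / 2 * (A y z - A z y) := by
  simp [antiPart, mul_sub]

theorem symPart_comm (y z : X) : symPart A y z = symPart A z y := by
  simp only [symPart_apply, add_comm]

theorem qF_symPart : qF (symPart A) = qF A := by
  ext y
  simp only [qF, symPart_apply]
  ring

theorem half_mul_fitz (x : X) (z : X →L[ℝ] ℝ) :
    ((1 / 2 : ℝ) : EReal) * fitz A (x, z)
      = legendre (qF (symPart A)) ((1 / 2 : ℝ) • (z + A.flip x)) := by
  rw [fitz, EReal.coe_mul_iSup (by norm_num), legendre, qF_symPart]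
  refine iSup_congr fun y => ?_
  norm_cast
  simp only [qF, smul_apply, add_apply, ContinuousLinearMap.flip_apply, smul_eq_mul]
  ring

-- The term of index `w` in the supremum is `⟨x, Ax⟩ - ⟨w - x, A(w - x)⟩`.
theorem fitz_two_smul_symPart_sub_flip_le (hA : ∀ x, 0 ≤ A x x) (x y : X) :
    fitz A (y, (2 : ℝ) • symPart A x - A.flip y) ≤ A x x := by
  refine iSup_le fun w => EReal.coe_le_coe_iff.mpr ?_
  have := hA (w - x)
  simp only [sub_apply, smul_apply, map_sub, ContinuousLinearMap.flip_apply, smul_eq_mul,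
    symPart_apply] at this ⊢
  linarith

theorem le_conj2_fitz (hA : ∀ x, 0 ≤ A x x) (x : X) (x' : X →L[ℝ] ℝ) (y : X) :
    (((x' - A x) y + A x x : ℝ) : EReal) ≤ conj2 (fitz A) (x', x) := by
  let ys := (2 : ℝ) • symPart A x - A.flip y
  calc (((x' - A x) y + A x x : ℝ) : EReal) = ((x' y + ys x : ℝ) : EReal) - (A x x : ℝ) := by
        rw [← EReal.coe_sub]
        congr 1
        simp only [ys, sub_apply, smul_apply, ContinuousLinearMap.flip_apply, smul_eq_mul,
          symPart_apply]
        ring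
    _ ≤ ((x' y + ys x : ℝ) : EReal) - fitz A (y, ys) :=
        EReal.sub_le_sub le_rfl (fitz_two_smul_symPart_sub_flip_le A hA x y)
    _ ≤ conj2 (fitz A) (x', x) :=
        le_iSup (fun q : X × (X →L[ℝ] ℝ) => ((x' q.1 + q.2 x : ℝ) : EReal) - fitz A q) (y, ys)

theorem conj2_fitz_of_ne (hA : ∀ x, 0 ≤ A x x) {x : X} {x' : X →L[ℝ] ℝ} (h : x' ≠ A x) :
    conj2 (fitz A) (x', x) = ⊤ := by
  obtain ⟨y, hy⟩ : ∃ y, (x' - A x) y ≠ 0 := by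
    by_contra! hc
    exact h (sub_eq_zero.mp (ContinuousLinearMap.ext hc))
  refine EReal.eq_top_iff_forall_lt _ |>.mpr fun r => ?_
  refine lt_of_lt_of_le ?_ (le_conj2_fitz A hA x x' (((r + 1 - A x x) / (x' - A x) y) • y))
  rw [map_smul, smul_eq_mul, div_mul_cancel₀ _ hy, EReal.coe_lt_coe_iff]
  linarith

theorem conj2_fitz_apply_self (hA : ∀ x, 0 ≤ A x x) (x : X) :
    conj2 (fitz A) (A x, x) = A x x := by
  refine le_antisymm (iSup_le fun ⟨y, y'⟩ => ?_) (by simpa using le_conj2_fitz A hA x (A x) 0)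
  have : ((A x y + y' x - A x x : ℝ) : EReal) ≤ fitz A (y, y') :=
    le_iSup (fun w : X => ((A w y + y' w - A w w : ℝ) : EReal)) x
  calc ((A x y + y' x : ℝ) : EReal) - fitz A (y, y')
      ≤ ((A x y + y' x : ℝ) : EReal) - ((A x y + y' x - A x x : ℝ) : EReal) :=
        EReal.sub_le_sub le_rfl this
    _ = A x x := by rw [← EReal.coe_sub]; congr 1; ring

theorem pzRep_apply (hA : ∀ x, 0 ≤ A x x) (x : X) (x' : X →L[ℝ] ℝ) :
    pzRep A (x, x') = legendre (qF (symPart A)) (x' - antiPart A x) + (qF (symPart A) x : ℝ) := by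
  have hopt : ((1 / 2 : ℝ) : EReal) * fitz A (x, x' + (x' - A x))
      + ((1 / 2 : ℝ) : EReal) * conj2 (fitz A) (x' - (x' - A x), x)
      = legendre (qF (symPart A)) (x' - antiPart A x) + (qF (symPart A) x : ℝ) := by
    have hz : (1 / 2 : ℝ) • (x' + (x' - A x) + A.flip x) = x' - antiPart A x := by
      ext z
      simp only [smul_apply, add_apply, sub_apply, ContinuousLinearMap.flip_apply, smul_eq_mul,
        antiPart_apply]
      ring
    rw [sub_sub_cancel, conj2_fitz_apply_self A hA, half_mul_fitz, hz, ← EReal.coe_mul,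
      qF_symPart, qF]
  refine le_antisymm ((iInf_le _ (x' - A x)).trans hopt.le) (le_iInf fun y' => ?_)
  by_cases hy' : y' = x' - A x
  · exact hy' ▸ hopt.ge
  · have hne : x' - y' ≠ A x := fun h => hy' (by rw [← h, sub_sub_cancel])
    rw [conj2_fitz_of_ne A hA hne, EReal.coe_mul_top_of_pos (by norm_num), half_mul_fitz,
      EReal.add_top_of_ne_bot (legendre_ne_bot _ _)]
    exact le_top

theorem ghoussoub_apply (x : X) (x' : X →L[ℝ] ℝ) :
    ghoussoub A (x, x') = (x' x : ℝ) + legendre (qF (symPart A)) (x' - A x) := by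
  have hw : x' - antiPart A x = (x' - A x) + symPart A x := by
    ext z
    simp only [sub_apply, add_apply, antiPart_apply, symPart_apply]
    ring
  rw [ghoussoub, hw, legendre_qF_add_apply _ (symPart_comm A), add_left_comm, ← EReal.coe_add,
    add_comm]
  congr 2
  simp only [qF, symPart_apply, sub_apply]
  ring

end Operator

theorem stmt8_general {X : Type*} [NormedAddCommGroup X] [NormedSpace ℝ X]
    (A : X →L[ℝ] X →L[ℝ] ℝ)
    (hmono : ∀ x : X, 0 ≤ A x x) :
    ∀ (x : X) (x' : X →L[ℝ] ℝ),
      pzRep A (x, x') = ghoussoub A (x, x') ∧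
      pzRep A (x, x') = ((x' x : ℝ) : EReal) + legendre (qF (symPart A)) (x' - A x) := by
  intro x x'
  have hpz : pzRep A (x, x') = ghoussoub A (x, x') := by
    rw [pzRep_apply A hmono, ghoussoub, add_comm]
  exact ⟨hpz, hpz.trans (ghoussoub_apply A x x')⟩

/-- Theorem 3.1, Claims 1 and 2. For `A : X → X*` continuous, linear
and monotone, the Penot–Zălinescu representer `𝒜_A` and the Ghoussoub representer `𝒞_A`
coincide, and `𝒜_A(x,x*) = 𝒞_A(x,x*) = ⟨x,x*⟩ + q_{A₊}*(x* - Ax)`. -/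
theorem stmt8 {X : Type*} [NormedAddCommGroup X] [NormedSpace ℝ X] [CompleteSpace X]
    (hrefl : Function.Surjective (NormedSpace.inclusionInDoubleDual ℝ X))
    (A : X →L[ℝ] X →L[ℝ] ℝ)
    (hmono : ∀ x : X, 0 ≤ A x x) :
    ∀ (x : X) (x' : X →L[ℝ] ℝ),
      pzRep A (x, x') = ghoussoub A (x, x') ∧
      pzRep A (x, x') = ((x' x : ℝ) : EReal) + legendre (qF (symPart A)) (x' - A x) :=
  stmt8_general A hmono
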